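/- Every element w ∈ W̃ lies in ^ΣW ∩ W^Σ, i.e. it is a minimal-length representative of its double coset W_Σ w W_Σ, and distinct elements of W̃ lie in distinct double cosets: for w, w' ∈ W̃, if W_Σ w W_Σ = W_Σ w' W_Σ then w = w'. In particular the map W̃ → W_Σ\W/W_Σ sending w to its double coset is injective. -/

import Mathlib

/-!
Relative Coxeter groups: common definitions.

`(W, S)` is a Coxeter system (Mathlib's `CoxeterSystem M W`), `ℓ = cs.length`.
For `w : W`, `invSet cs w` is the set `T(w)` of left inversions of `w`, and
`descSet cs w = T(w) ∩ S` is `D(w)`.  For a subset `Sg ⊆ S` (playing the role of `Σ`),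
`par Sg` is the standard parabolic subgroup `W_Σ`, `parRefl Sg` its set of
reflections `T_Σ`, `minRight cs Sg = W^Σ`, `minLeft cs Sg = ^ΣW`,
`relN cs Sg Sg' = N(Σ, Σ')`, `IsLongest cs Sg w` says `w` is a longest element of `W_Σ`,
`longest cs Sg` is the longest element `w₀^Σ`, `relW cs Sg = W̃`,
`complSet cs Sg = Σ^∁`, `tilde cs Sg s = s̃ = w₀^{Σ∪{s}} w₀^Σ`, `relS cs Sg = S̃`,
`relLength cs Sg = ℓ̃ : W → ℕ∞`, and `GoodSubset cs Sg` records the standing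
hypotheses (1) and (2) on `Σ`.
-/

namespace RelativeCoxeter

variable {B W : Type*} [Group W] {M : CoxeterMatrix B}

/-- The set `S` of simple reflections of the Coxeter system. -/
def simpleSet (cs : CoxeterSystem M W) : Set W := Set.range cs.simple

/-- `T(w)`: the set of left inversions of `w`, i.e. reflections `t` with `ℓ(tw) < ℓ(w)`. -/
def invSet (cs : CoxeterSystem M W) (w : W) : Set W :=
  {t | cs.IsReflection t ∧ cs.length (t * w) < cs.length w}

/-- `D(w) = T(w) ∩ S`. -/
def descSet (cs : CoxeterSystem M W) (w : W) : Set W :=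
  invSet cs w ∩ simpleSet cs

/-- The standard parabolic subgroup `W_Σ` generated by `Σ`. -/
def par (Sg : Set W) : Subgroup W := Subgroup.closure Sg

/-- `T_Σ`: the set of reflections of the Coxeter system `(W_Σ, Σ)`. -/
def parRefl (Sg : Set W) : Set W :=
  {t | ∃ u ∈ par Sg, ∃ s ∈ Sg, t = u * s * u⁻¹}

/-- `W^Σ = {w : T(w⁻¹) ∩ T_Σ = ∅}`, minimal-length representatives of `W/W_Σ`. -/
def minRight (cs : CoxeterSystem M W) (Sg : Set W) : Set W :=
  {w | invSet cs w⁻¹ ∩ parRefl Sg = ∅}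

/-- `^ΣW = {w : T(w) ∩ T_Σ = ∅}`, minimal-length representatives of `W_Σ\W`. -/
def minLeft (cs : CoxeterSystem M W) (Sg : Set W) : Set W :=
  {w | invSet cs w ∩ parRefl Sg = ∅}

/-- `N(Σ, Σ') = {y ∈ W^Σ ∩ ^{Σ'}W : y W_Σ y⁻¹ = W_{Σ'}}`. -/
def relN (cs : CoxeterSystem M W) (Sg Sg' : Set W) : Set W :=
  {y | y ∈ minRight cs Sg ∧ y ∈ minLeft cs Sg' ∧
    (fun u => y * u * y⁻¹) '' (par Sg : Set W) = (par Sg' : Set W)}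

/-- `w` is a longest element of `W_Σ`. -/
def IsLongest (cs : CoxeterSystem M W) (Sg : Set W) (w : W) : Prop :=
  w ∈ par Sg ∧ ∀ u ∈ par Sg, cs.length u ≤ cs.length w

/-- The longest element `w₀^Σ` of `W_Σ` (defined when it exists; junk value `1` otherwise). -/
noncomputable def longest (cs : CoxeterSystem M W) (Sg : Set W) : W :=
  letI := Classical.propDecidable (∃ w, IsLongest cs Sg w)
  if h : ∃ w, IsLongest cs Sg w then h.choose else 1

/-- `W̃ = {w : w W_Σ w⁻¹ = W_Σ and T(w) ∩ T_Σ = ∅}`. -/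
def relW (cs : CoxeterSystem M W) (Sg : Set W) : Set W :=
  {w | (fun u => w * u * w⁻¹) '' (par Sg : Set W) = (par Sg : Set W) ∧
    invSet cs w ∩ parRefl Sg = ∅}

/-- `Σ^∁ = {s ∈ S ∖ Σ : W_{Σ∪{s}} is finite}`. -/
def complSet (cs : CoxeterSystem M W) (Sg : Set W) : Set W :=
  {s ∈ simpleSet cs \ Sg | ((par (Sg ∪ {s}) : Set W)).Finite}

/-- `s̃ = w₀^{Σ∪{s}} w₀^Σ`. -/
noncomputable def tilde (cs : CoxeterSystem M W) (Sg : Set W) (s : W) : W :=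
  longest cs (Sg ∪ {s}) * longest cs Sg

/-- `S̃ = {s̃ : s ∈ Σ^∁}`. -/
noncomputable def relS (cs : CoxeterSystem M W) (Sg : Set W) : Set W :=
  {w | ∃ s ∈ complSet cs Sg, w = tilde cs Sg s}

/-- `ℓ̃(w) ∈ ℕ ∪ {∞}`: the minimal `q` such that `w = w₁ ⋯ w_q` with all `w_i ∈ S̃`. -/
noncomputable def relLength (cs : CoxeterSystem M W) (Sg : Set W) (w : W) : ℕ∞ :=
  sInf {q : ℕ∞ | ∃ l : List W, (∀ x ∈ l, x ∈ relS cs Sg) ∧ l.prod = w ∧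
    (l.length : ℕ∞) = q}

/-- The standing hypotheses on `Σ`: `Σ ⊆ S`, `W_Σ` is finite, and for every `Σ'` with
`Σ ⊆ Σ' ⊆ S` and `W_{Σ'}` finite, the longest element `w₀^{Σ'}` normalises `W_Σ`. -/
def GoodSubset (cs : CoxeterSystem M W) (Sg : Set W) : Prop :=
  Sg ⊆ simpleSet cs ∧ ((par Sg : Set W)).Finite ∧
  ∀ Sg' : Set W, Sg ⊆ Sg' → Sg' ⊆ simpleSet cs → ((par Sg' : Set W)).Finite →
    ∀ w0 : W, IsLongest cs Sg' w0 →
      (fun u => w0 * u * w0⁻¹) '' (par Sg : Set W) = (par Sg : Set W)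

/-!
For `w ∈ ^ΣW` and `u ∈ W_Σ` lengths add: `ℓ(uw) = ℓ(u) + ℓ(w)`. Inducting on `u`, a simple
reflection `s ∈ Σ` is a left descent of `uw` iff it is one of `u`, because
`T(uw) = T(u) △ u T(w) u⁻¹` and `u⁻¹ s u ∈ T_Σ` is not in `T(w)`. This symmetric difference
formula is read off the reflection cocycle `W → {±1}^W`, obtained by lifting `s ↦ (δ_s, s)` to the
semidirect product `{±1}^W ⋊ W` (`inversionSign`).

For `w ∈ W̃` we have `W_Σ w W_Σ = W_Σ w`, so the double coset consists of the elements `u w` with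
`ℓ(uw) = ℓ(u) + ℓ(w)`; hence `w` is its unique shortest element. Moreover `w ∈ W^Σ`, since for
`t ∈ T_Σ` also `wt = (wtw⁻¹) w` with `wtw⁻¹ ∈ W_Σ`, so `ℓ(wt) ≥ ℓ(w)`.
-/

open CoxeterSystem List

section SignFunctions

noncomputable def signDelta {α : Type*} (x : α) : α → ℤˣ :=
  letI := Classical.decEq α
  fun t => if t = x then -1 else 1

@[simp] lemma signDelta_self {α : Type*} (x : α) : signDelta x x = -1 := by
  simp [signDelta]

lemma signDelta_of_ne {α : Type*} {x t : α} (h : t ≠ x) : signDelta x t = 1 := by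
  simp [signDelta, h]

lemma prod_map_signDelta_apply_of_notMem {α : Type*} {l : List α} {t : α} (h : t ∉ l) :
    (l.map signDelta).prod t = 1 := by
  induction l with
  | nil => rfl
  | cons x l ih =>
    rw [List.mem_cons, not_or] at h
    rw [List.map_cons, List.prod_cons, Pi.mul_apply, signDelta_of_ne h.1, ih h.2, mul_one]

def conjAction : W →* MulAut (W → ℤˣ) where
  toFun w :=
    { toFun := fun v t => v (w⁻¹ * t * w)
      invFun := fun v t => v (w * t * w⁻¹)
      left_inv := fun v => by funext t; group
      right_inv := fun v => by funext t; group
      map_mul' := fun _ _ => rfl }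
  map_one' := by ext v t; simp
  map_mul' x y := by ext v t; simp [mul_assoc]

@[simp] lemma conjAction_apply (w : W) (v : W → ℤˣ) (t : W) :
    conjAction w v t = v (w⁻¹ * t * w) := rfl

lemma conjAction_signDelta (w x : W) :
    conjAction w (signDelta x) = signDelta (w * x * w⁻¹) := by
  funext t
  rw [conjAction_apply]
  by_cases h : t = w * x * w⁻¹
  · subst h
    rw [show w⁻¹ * (w * x * w⁻¹) * w = x by group, signDelta_self, signDelta_self]
  · rw [signDelta_of_ne h, signDelta_of_ne]
    rintro hx
    exact h (by rw [← hx]; group)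

end SignFunctions

variable (cs : CoxeterSystem M W)

local prefix:100 "s" => cs.simple
local prefix:100 "π" => cs.wordProd
local prefix:100 "ℓ" => cs.length
local prefix:100 "lis" => cs.leftInvSeq

section InversionSign

noncomputable def cocycleGen (i : B) : (W → ℤˣ) ⋊[conjAction] W := ⟨signDelta (s i), s i⟩

lemma prod_map_cocycleGen (ω : List B) :
    (ω.map (cocycleGen cs)).prod = ⟨((lis ω).map signDelta).prod, π ω⟩ := by
  induction ω with
  | nil => rfl
  | cons i ω ih =>
    rw [List.map_cons, List.prod_cons, ih]
    refine SemidirectProduct.ext ?_ ?_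
    · rw [SemidirectProduct.mul_left]
      show signDelta (s i) * conjAction (s i) _ = _
      rw [map_list_prod, List.map_map]
      simp [leftInvSeq, Function.comp_def, conjAction_signDelta]
    · simp [cocycleGen, wordProd_cons]

lemma cocycleGen_mul_pow (i j : B) (p : ℕ) :
    (cocycleGen cs i * cocycleGen cs j) ^ p =
      ((alternatingWord i j (2 * p)).map (cocycleGen cs)).prod := by
  induction p with
  | zero => rfl
  | succ p ih =>
    have : alternatingWord i j (2 * (p + 1)) = i :: j :: alternatingWord i j (2 * p) := by
      rw [show 2 * (p + 1) = 2 * p + 1 + 1 by ring, alternatingWord_succ', alternatingWord_succ']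
      simp
    rw [pow_succ', ih, this]
    simp [mul_assoc]

/-- The left inversion sequence of the braid word `(s_i s_j)^{m_{ij}}` is periodic of period
`m_{ij}`, so it consists of two equal halves. -/
lemma prod_map_signDelta_leftInvSeq_braid (i j : B) :
    ((lis (alternatingWord i j (2 * M i j))).map signDelta).prod = 1 := by
  set f : ℕ → W := fun k => s i * (s j * s i) ^ k
  have hlis : lis (alternatingWord i j (2 * M i j)) = (range (M i j + M i j)).map f := by
    refine List.ext_getElem (by simp [two_mul]) fun k hk _ => ?_
    rw [getElem_leftInvSeq_alternatingWord cs i j _ k (by simpa using hk),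
      prod_alternatingWord_eq_mul_pow]
    simp [f, Nat.add_div]
  have hperiod : (range (M i j)).map (f ∘ (M i j + ·)) = (range (M i j)).map f := by
    simp [f, Function.comp_def, pow_add]
  rw [hlis, List.range_add, List.map_append, List.map_map, hperiod, List.map_append,
    List.prod_append]
  exact funext fun t => Int.units_mul_self _

lemma isLiftable_cocycleGen : M.IsLiftable (cocycleGen cs) := fun i j => by
  rw [cocycleGen_mul_pow, prod_map_cocycleGen, prod_map_signDelta_leftInvSeq_braid,
    prod_alternatingWord_eq_mul_pow]
  simp

noncomputable def cocycleHom : W →* (W → ℤˣ) ⋊[conjAction] W :=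
  cs.lift ⟨_, isLiftable_cocycleGen cs⟩

lemma cocycleHom_wordProd (ω : List B) :
    cocycleHom cs (π ω) = ⟨((lis ω).map signDelta).prod, π ω⟩ := by
  rw [← prod_map_cocycleGen, wordProd, map_list_prod, List.map_map]
  congr 2
  funext i
  exact cs.lift_apply_simple (isLiftable_cocycleGen cs) i

noncomputable def inversionSign (w : W) : W → ℤˣ := (cocycleHom cs w).left

lemma inversionSign_wordProd (ω : List B) :
    inversionSign cs (π ω) = ((lis ω).map signDelta).prod := by
  rw [inversionSign, cocycleHom_wordProd]

lemma cocycleHom_right (w : W) : (cocycleHom cs w).right = w := by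
  obtain ⟨ω, rfl⟩ := cs.wordProd_surjective w
  rw [cocycleHom_wordProd]

lemma inversionSign_mul (x y t : W) :
    inversionSign cs (x * y) t = inversionSign cs x t * inversionSign cs y (x⁻¹ * t * x) := by
  rw [inversionSign, map_mul, SemidirectProduct.mul_left, cocycleHom_right]
  rfl

lemma inversionSign_one : inversionSign cs 1 = 1 := by
  simpa using inversionSign_wordProd cs []

lemma inversionSign_simple (i : B) : inversionSign cs (s i) = signDelta (s i) := by
  simpa using inversionSign_wordProd cs [i]

lemma inversionSign_self_of_isReflection {t : W} (ht : cs.IsReflection t) :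
    inversionSign cs t t = -1 := by
  obtain ⟨w, i, rfl⟩ := ht
  have hconj : w⁻¹ * (w * s i * w⁻¹) * w = s i := by group
  have hinv : inversionSign cs w⁻¹ (s i) = inversionSign cs w (w * s i * w⁻¹) := by
    have h := inversionSign_mul cs w w⁻¹ (w * s i * w⁻¹)
    rw [mul_inv_cancel, inversionSign_one, hconj, Pi.one_apply, eq_comm] at h
    rw [eq_inv_of_mul_eq_one_right h, Int.units_inv_eq_self]
  rw [inversionSign_mul, inversionSign_mul, inversionSign_simple, hconj,
    show (w * s i)⁻¹ * (w * s i * w⁻¹) * (w * s i) = s i by group, hinv, signDelta_self,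
    mul_right_comm, Int.units_mul_self, one_mul]

lemma isLeftInversion_of_inversionSign_eq_neg_one {w t : W} (h : inversionSign cs w t = -1) :
    cs.IsLeftInversion w t := by
  obtain ⟨ω, hω, rfl⟩ := cs.exists_isReduced w
  refine cs.isLeftInversion_of_mem_leftInvSeq hω (not_not.mp fun hmem => ?_)
  rw [inversionSign_wordProd, prod_map_signDelta_apply_of_notMem hmem] at h
  exact absurd h (by decide)

lemma isLeftInversion_iff_inversionSign {t : W} (ht : cs.IsReflection t) (w : W) :
    cs.IsLeftInversion w t ↔ inversionSign cs w t = -1 := by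
  refine ⟨fun h => ?_, isLeftInversion_of_inversionSign_eq_neg_one cs⟩
  refine (Int.units_eq_one_or _).resolve_left fun h1 => ?_
  have htw : cs.IsLeftInversion (t * w) t := isLeftInversion_of_inversionSign_eq_neg_one cs <| by
    rw [inversionSign_mul, inversionSign_self_of_isReflection cs ht,
      show t⁻¹ * t * t = t by group, h1, mul_one]
  have := htw.2
  rw [← mul_assoc, ht.mul_self, one_mul] at this
  exact absurd h.2 (lt_asymm this)

lemma isLeftInversion_mul_iff_of_not {x y t : W} (hy : ¬ cs.IsLeftInversion y (x⁻¹ * t * x)) :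
    cs.IsLeftInversion (x * y) t ↔ cs.IsLeftInversion x t := by
  by_cases ht : cs.IsReflection t
  · have ht' : cs.IsReflection (x⁻¹ * t * x) := by simpa using ht.conj x⁻¹
    rw [isLeftInversion_iff_inversionSign cs ht', ← Ne, Int.units_ne_iff_eq_neg, neg_neg] at hy
    rw [isLeftInversion_iff_inversionSign cs ht, isLeftInversion_iff_inversionSign cs ht,
      inversionSign_mul, hy, mul_one]
  · simp [IsLeftInversion, ht]

end InversionSign

section Parabolic

variable {Sg : Set W}

lemma conj_mem_parRefl {u t : W} (hu : u ∈ par Sg) (ht : t ∈ parRefl Sg) :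
    u * t * u⁻¹ ∈ parRefl Sg := by
  obtain ⟨v, hv, x, hx, rfl⟩ := ht
  exact ⟨u * v, mul_mem hu hv, x, hx, by group⟩

lemma parRefl_subset_par : parRefl Sg ⊆ (par Sg : Set W) := by
  rintro t ⟨u, hu, x, hx, rfl⟩
  exact mul_mem (mul_mem hu (Subgroup.subset_closure hx)) (inv_mem hu)

lemma not_isLeftInversion_of_mem_minLeft {w t : W} (hw : w ∈ minLeft cs Sg)
    (ht : t ∈ parRefl Sg) : ¬ cs.IsLeftInversion w t :=
  fun h => (Set.eq_empty_iff_forall_notMem.mp hw) t ⟨h, ht⟩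

lemma isLeftDescent_mul_iff_of_mem_minLeft {w y : W} (hw : w ∈ minLeft cs Sg)
    (hy : y ∈ par Sg) {i : B} (hi : s i ∈ Sg) :
    cs.IsLeftDescent (y * w) i ↔ cs.IsLeftDescent y i := by
  have hconj : y⁻¹ * s i * y ∈ parRefl Sg := by
    simpa using conj_mem_parRefl (inv_mem hy) ⟨1, one_mem _, s i, hi, by simp⟩
  rw [← isLeftInversion_simple_iff_isLeftDescent, ← isLeftInversion_simple_iff_isLeftDescent]
  exact isLeftInversion_mul_iff_of_not cs (not_isLeftInversion_of_mem_minLeft cs hw hconj)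

lemma length_mul_of_mem_minLeft (hS : Sg ⊆ simpleSet cs) {w : W} (hw : w ∈ minLeft cs Sg)
    {u : W} (hu : u ∈ par Sg) : ℓ (u * w) = ℓ u + ℓ w := by
  have step : ∀ x ∈ Sg, ∀ y ∈ par Sg, ℓ (y * w) = ℓ y + ℓ w →
      ℓ (x * y * w) = ℓ (x * y) + ℓ w := by
    rintro _ hx y hy ih
    obtain ⟨i, rfl⟩ := hS hx
    have hdesc := isLeftDescent_mul_iff_of_mem_minLeft cs hw hy hx
    simp only [IsLeftDescent] at hdesc
    rw [mul_assoc]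
    rcases cs.length_simple_mul y i with h | h <;>
      rcases cs.length_simple_mul (y * w) i with h' | h' <;> omega
  induction hu using Subgroup.closure_induction_left with
  | one => simp
  | mul_left x hx y hy ih => exact step x hx y hy ih
  | inv_mul_cancel x hx y hy ih =>
    obtain ⟨i, rfl⟩ := hS hx
    rw [inv_simple]
    exact step _ hx y hy ih

lemma conj_mem_par_of_mem_relW {w v : W} (hw : w ∈ relW cs Sg) (hv : v ∈ par Sg) :
    w * v * w⁻¹ ∈ par Sg := by
  rw [← SetLike.mem_coe, ← hw.1]
  exact ⟨v, hv, rfl⟩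

lemma exists_mem_par_mul_eq_of_mem_relW {w u v : W} (hw : w ∈ relW cs Sg) (hu : u ∈ par Sg)
    (hv : v ∈ par Sg) :
    ∃ u' ∈ par Sg, u * w * v = u' * w :=
  ⟨u * (w * v * w⁻¹), mul_mem hu (conj_mem_par_of_mem_relW cs hw hv), by group⟩

lemma mem_minRight_of_mem_relW (hS : Sg ⊆ simpleSet cs) {w : W} (hw : w ∈ relW cs Sg) :
    w ∈ minRight cs Sg := by
  refine Set.eq_empty_iff_forall_notMem.mpr fun t ⟨htw, ht⟩ => ?_
  have hlt : ℓ (w * t) < ℓ w := by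
    simpa [← cs.length_inv (w * t), htw.1.inv] using htw.2
  have := length_mul_of_mem_minLeft cs hS hw.2
    (conj_mem_par_of_mem_relW cs hw (parRefl_subset_par ht))
  rw [inv_mul_cancel_right] at this
  omega

lemma length_le_length_mul_mul_of_mem_relW (hS : Sg ⊆ simpleSet cs) {w u v : W}
    (hw : w ∈ relW cs Sg) (hu : u ∈ par Sg) (hv : v ∈ par Sg) : ℓ w ≤ ℓ (u * w * v) := by
  obtain ⟨u', hu', e⟩ := exists_mem_par_mul_eq_of_mem_relW cs hw hu hv
  rw [e, length_mul_of_mem_minLeft cs hS hw.2 hu']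
  omega

lemma eq_of_mem_relW_of_eq_mul_mul (hS : Sg ⊆ simpleSet cs) {w w' u v : W}
    (hw : w ∈ relW cs Sg) (hw' : w' ∈ relW cs Sg) (hu : u ∈ par Sg) (hv : v ∈ par Sg)
    (h : w' = u * w * v) : w = w' := by
  obtain ⟨u', hu', e⟩ := exists_mem_par_mul_eq_of_mem_relW cs hw hu hv
  rw [e] at h
  have h₁ := length_mul_of_mem_minLeft cs hS hw.2 hu'
  have h₂ := length_mul_of_mem_minLeft cs hS hw'.2 (inv_mem hu')
  rw [h, inv_mul_cancel_left, cs.length_inv] at h₂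
  have hu'1 : u' = 1 := cs.length_eq_zero_iff.mp (by omega)
  rw [h, hu'1, one_mul]

end Parabolic

/-- every `w ∈ W̃` lies in `^ΣW ∩ W^Σ` and is the minimal-length
representative of its double coset `W_Σ w W_Σ`; distinct elements of `W̃` lie in
distinct double cosets. -/
theorem relW_minimal_double_coset (Sg : Set W) (hSg : GoodSubset cs Sg) :
    (∀ w ∈ relW cs Sg, w ∈ minLeft cs Sg ∧ w ∈ minRight cs Sg ∧
      ∀ u ∈ par Sg, ∀ v ∈ par Sg, cs.length w ≤ cs.length (u * w * v)) ∧
    (∀ w ∈ relW cs Sg, ∀ w' ∈ relW cs Sg,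
      (∃ u ∈ par Sg, ∃ v ∈ par Sg, w' = u * w * v) → w = w') := by
  obtain ⟨hS, -, -⟩ := hSg
  refine ⟨fun w hw => ⟨hw.2, mem_minRight_of_mem_relW cs hS hw, ?_⟩, ?_⟩
  · exact fun u hu v hv => length_le_length_mul_mul_of_mem_relW cs hS hw hu hv
  · rintro w hw w' hw' ⟨u, hu, v, hv, h⟩
    exact eq_of_mem_relW_of_eq_mul_mul cs hS hw hw' hu hv h

end RelativeCoxeter
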